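/- arXiv:2412.16738 — 4 statements merged into one kernel-verified Lean document; each statement's English description precedes it below -/
import Mathlib

section
/- Let d ≥ 2 and m ∈ ℕ. Assume the Kolmogorov-representation hypothesis: every continuous function f : [0,1]^d → ℝ can be written as f(x₁,…,x_d) = Σ_{q=0}^{m} g_q(Σ_{p=1}^{d} ψ_{p,q}(x_p)) for some continuous functions ψ_{p,q} : [0,1] → ℝ and g_q : ℝ → ℝ. Let A_ψ be a subset of C([0,1], ℝ) that is dense in the supremum norm, and let A_g be a subset of C(ℝ, ℝ) that is dense in the topology of uniform convergence on compact sets. Then for every continuous f : [0,1]^d → ℝ and every ε > 0 there exist functions Ψ_{p,q} ∈ A_ψ (for 1 ≤ p ≤ d, 0 ≤ q ≤ m) and G_q ∈ A_g (for 0 ≤ q ≤ m) such that sup_{x ∈ [0,1]^d} |f(x) − Σ_{q=0}^{m} G_q(Σ_{p=1}^{d} Ψ_{p,q}(x_p))| < ε. -/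
/-- **Universal Approximation Theorem for two-block KKANs** (Theorem 1 of the paper).
Assuming the Kolmogorov representation hypothesis, any continuous function on the unit
cube can be uniformly approximated by two-block superpositions whose inner functions come
from a dense subset `Aψ` of `C([0,1], ℝ)` (sup-norm topology) and whose outer functions
come from a dense subset `Ag` of `C(ℝ, ℝ)` (topology of uniform convergence on compacta,
i.e. the compact-open topology). -/
theorem kkan_universal_approximation
    (d m : ℕ) (hd : 2 ≤ d)
    (hKolm : ∀ f : (Fin d → Set.Icc (0:ℝ) 1) → ℝ, Continuous f →
      ∃ (ψ : Fin d → Fin (m + 1) → C(Set.Icc (0:ℝ) 1, ℝ)) (g : Fin (m + 1) → C(ℝ, ℝ)),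
        ∀ x, f x = ∑ q, g q (∑ p, ψ p q (x p)))
    (Aψ : Set C(Set.Icc (0:ℝ) 1, ℝ)) (hAψ : Dense Aψ)
    (Ag : Set C(ℝ, ℝ)) (hAg : Dense Ag)
    (f : (Fin d → Set.Icc (0:ℝ) 1) → ℝ) (hf : Continuous f)
    (ε : ℝ) (hε : 0 < ε) :
    ∃ (Ψ : Fin d → Fin (m + 1) → C(Set.Icc (0:ℝ) 1, ℝ)) (G : Fin (m + 1) → C(ℝ, ℝ)),
      (∀ p q, Ψ p q ∈ Aψ) ∧ (∀ q, G q ∈ Ag) ∧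
      ∀ x, |f x - ∑ q, G q (∑ p, Ψ p q (x p))| < ε := by
  obtain ⟨ψ, g, hrep⟩ := hKolm f hf
  have hd0 : (0:ℝ) < d := by
    have : 0 < d := lt_of_lt_of_le (by norm_num) hd
    exact_mod_cast this
  -- the combined outer function
  set F : (Fin (m + 1) → ℝ) → ℝ := fun y => ∑ q, g q (y q) with hF
  have hFc : Continuous F := by
    apply continuous_finset_sum
    intro q _
    exact (g q).continuous.comp (continuous_apply q)
  -- bound on the inner functions
  set R : ℝ := ∑ q, ∑ p, ‖ψ p q‖ with hRdef
  have hR0 : 0 ≤ R := Finset.sum_nonneg fun q _ =>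
    Finset.sum_nonneg fun p _ => norm_nonneg _
  set Kset : Set ℝ := Set.Icc (-(R + d)) (R + d) with hKdef
  set T : Set (Fin (m + 1) → ℝ) := Set.univ.pi fun _ => Kset with hTdef
  have hTcomp : IsCompact T := isCompact_univ_pi fun _ => isCompact_Icc
  -- uniform continuity of F on T
  have hUC : UniformContinuousOn F T :=
    hTcomp.uniformContinuousOn_of_continuous hFc.continuousOn
  rw [Metric.uniformContinuousOn_iff] at hUC
  obtain ⟨δ₀, hδ₀, hUC⟩ := hUC (ε / 2) (by positivity)
  -- choose inner approximants
  set δψ : ℝ := min 1 (δ₀ / (2 * d)) with hδψdef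
  have hδψ0 : 0 < δψ := lt_min one_pos (by positivity)
  have hΨex : ∀ p q, ∃ Ψ ∈ Aψ, dist Ψ (ψ p q) < δψ := by
    intro p q
    obtain ⟨Ψ, hΨ1, hΨ2⟩ := Metric.dense_iff.mp hAψ (ψ p q) δψ hδψ0
    exact ⟨Ψ, hΨ2, by simpa [dist_comm] using Metric.mem_ball.mp hΨ1⟩
  choose Ψ hΨmem hΨd using hΨex
  -- choose outer approximants
  haveI : CompactSpace Kset := isCompact_iff_compactSpace.mp isCompact_Icc
  set η : ℝ := ε / (2 * (m + 1)) with hηdef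
  have hη0 : 0 < η := by positivity
  have hGex : ∀ q, ∃ G ∈ Ag,
      dist (ContinuousMap.restrict Kset G) (ContinuousMap.restrict Kset (g q)) < η := by
    intro q
    have hUopen : IsOpen {G : C(ℝ, ℝ) |
        dist (ContinuousMap.restrict Kset G) (ContinuousMap.restrict Kset (g q)) < η} := by
      have : Continuous fun G : C(ℝ, ℝ) => ContinuousMap.restrict Kset G :=
        ContinuousMap.continuous_restrict Kset
      exact Metric.isOpen_ball.preimage this
    obtain ⟨G, hG1, hG2⟩ := hAg.exists_mem_open hUopen
      ⟨g q, by simp [Metric.mem_ball, hη0]⟩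
    exact ⟨G, hG1, hG2⟩
  choose G hGmem hGd using hGex
  refine ⟨Ψ, G, hΨmem, hGmem, fun x => ?_⟩
  set s : Fin (m + 1) → ℝ := fun q => ∑ p, ψ p q (x p) with hsdef
  set S : Fin (m + 1) → ℝ := fun q => ∑ p, Ψ p q (x p) with hSdef
  -- pointwise bounds
  have hsb : ∀ q, |s q| ≤ R := by
    intro q
    calc |s q| ≤ ∑ p, |ψ p q (x p)| := Finset.abs_sum_le_sum_abs _ _
      _ ≤ ∑ p, ‖ψ p q‖ := Finset.sum_le_sum fun p _ =>
            (ψ p q).norm_coe_le_norm (x p)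
      _ ≤ R := Finset.single_le_sum
            (f := fun q => ∑ p, ‖ψ p q‖)
            (fun i _ => Finset.sum_nonneg fun p _ => norm_nonneg _)
            (Finset.mem_univ q)
  have hdiff : ∀ q, |S q - s q| ≤ d * δψ := by
    intro q
    calc |S q - s q| = |∑ p, (Ψ p q (x p) - ψ p q (x p))| := by
          rw [← Finset.sum_sub_distrib]
      _ ≤ ∑ p, |Ψ p q (x p) - ψ p q (x p)| := Finset.abs_sum_le_sum_abs _ _
      _ ≤ ∑ _p : Fin d, δψ := Finset.sum_le_sum fun p _ => by
            have h1 : dist (Ψ p q (x p)) (ψ p q (x p)) ≤ dist (Ψ p q) (ψ p q) :=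
              ContinuousMap.dist_apply_le_dist (x p)
            have := le_of_lt (hΨd p q)
            rw [Real.dist_eq] at h1
            linarith
      _ = d * δψ := by simp [mul_comm]
  have hsT : s ∈ T := by
    intro q _
    have := hsb q
    rw [abs_le] at this
    constructor <;> [linarith; linarith]
  have hST : S ∈ T := by
    intro q _
    have h1 := hsb q
    have h2 := hdiff q
    have h3 : d * δψ ≤ d * 1 := by
      apply mul_le_mul_of_nonneg_left (min_le_left _ _) (le_of_lt hd0)
    rw [abs_le] at h1
    rw [abs_le] at h2
    constructor <;> [linarith; linarith]
  -- first error term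
  have h1 : |F s - F S| < ε / 2 := by
    have hdist : dist s S < δ₀ := by
      rw [dist_pi_lt_iff hδ₀]
      intro q
      rw [Real.dist_eq]
      have h2 := hdiff q
      have h3 : d * δψ ≤ d * (δ₀ / (2 * d)) :=
        mul_le_mul_of_nonneg_left (min_le_right _ _) (le_of_lt hd0)
      have h4 : d * (δ₀ / (2 * d)) = δ₀ / 2 := by field_simp
      rw [abs_sub_comm] at h2
      linarith
    have := hUC s hsT S hST hdist
    rwa [Real.dist_eq] at this
  -- second error term
  have h2 : |F S - ∑ q, G q (S q)| < ε / 2 := by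
    have hterm : ∀ q, |g q (S q) - G q (S q)| < η := by
      intro q
      have hSK : S q ∈ Kset := hST q (Set.mem_univ q)
      have hle : dist ((ContinuousMap.restrict Kset (G q)) ⟨S q, hSK⟩)
          ((ContinuousMap.restrict Kset (g q)) ⟨S q, hSK⟩)
          ≤ dist (ContinuousMap.restrict Kset (G q)) (ContinuousMap.restrict Kset (g q)) :=
        ContinuousMap.dist_apply_le_dist _
      simp only [ContinuousMap.restrict_apply] at hle
      rw [Real.dist_eq] at hle
      have := lt_of_le_of_lt hle (hGd q)
      rw [abs_sub_comm] at this
      linarith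
    calc |F S - ∑ q, G q (S q)| = |∑ q, (g q (S q) - G q (S q))| := by
          rw [hF]; rw [← Finset.sum_sub_distrib]
      _ ≤ ∑ q, |g q (S q) - G q (S q)| := Finset.abs_sum_le_sum_abs _ _
      _ < ∑ _q : Fin (m + 1), η :=
          Finset.sum_lt_sum_of_nonempty Finset.univ_nonempty fun q _ => hterm q
      _ = (m + 1) * η := by simp [mul_comm]
      _ = ε / 2 := by
          rw [hηdef]; field_simp
  have hfx : f x = F s := hrep x
  calc |f x - ∑ q, G q (S q)| = |(F s - F S) + (F S - ∑ q, G q (S q))| := by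
        rw [hfx]; ring_nf
    _ ≤ |F s - F S| + |F S - ∑ q, G q (S q)| := abs_add_le _ _
    _ < ε / 2 + ε / 2 := add_lt_add h1 h2
    _ = ε := by ring
end

section
/- Let d ≥ 1 and m ∈ ℕ, and let ε > 0, B > 0 and δ ∈ (0,1]. For 1 ≤ p ≤ d and 0 ≤ q ≤ m, let ψ_{p,q} : [0,1] → ℝ be functions with sup_{x ∈ [0,1]} |ψ_{p,q}(x)| ≤ B/d, and let g_q : ℝ → ℝ be functions such that for all ξ, η ∈ [−B−1, B+1] with |ξ − η| < δ one has |g_q(ξ) − g_q(η)| < ε/(2(m+1)). Suppose Ψ_{p,q} : [0,1] → ℝ satisfy sup_{x ∈ [0,1]} |ψ_{p,q}(x) − Ψ_{p,q}(x)| < δ/d for all p, q, and suppose G_q : ℝ → ℝ satisfy sup_{η ∈ [−B−1, B+1]} |g_q(η) − G_q(η)| < ε/(2(m+1)) for all q. Then sup_{x ∈ [0,1]^d} |Σ_{q=0}^{m} g_q(Σ_{p=1}^{d} ψ_{p,q}(x_p)) − Σ_{q=0}^{m} G_q(Σ_{p=1}^{d} Ψ_{p,q}(x_p))| < ε. -/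
/-- **Quantitative stability estimate** at the core of the proof of the paper's
Universal Approximation Theorem (Appendix A): a Kolmogorov-type superposition
`Σ_q g_q (Σ_p ψ_{p,q}(x_p))` changes by less than `ε` in supremum norm on `[0,1]^d`
when the inner functions are perturbed uniformly by less than `δ/d` on `[0,1]` and the
outer functions are perturbed uniformly by less than `ε/(2(m+1))` on `[-B-1, B+1]`,
where `δ` is a modulus of uniform continuity of the outer functions at tolerance
`ε/(2(m+1))`. -/
theorem kkan_stability_estimate
    (d m : ℕ) (hd : 1 ≤ d)
    (ε B δ : ℝ) (hε : 0 < ε) (hB : 0 < B) (hδ0 : 0 < δ) (hδ1 : δ ≤ 1)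
    (ψ Ψ : Fin d → Fin (m + 1) → ℝ → ℝ)
    (g G : Fin (m + 1) → ℝ → ℝ)
    (hψ : ∀ p q, ∀ x ∈ Set.Icc (0:ℝ) 1, |ψ p q x| ≤ B / d)
    (hg : ∀ q, ∀ ξ ∈ Set.Icc (-B - 1) (B + 1), ∀ η ∈ Set.Icc (-B - 1) (B + 1),
      |ξ - η| < δ → |g q ξ - g q η| < ε / (2 * (m + 1)))
    (hΨ : ∀ p q, ∀ x ∈ Set.Icc (0:ℝ) 1, |ψ p q x - Ψ p q x| < δ / d)
    (hG : ∀ q, ∀ η ∈ Set.Icc (-B - 1) (B + 1), |g q η - G q η| < ε / (2 * (m + 1)))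
    (x : Fin d → ℝ) (hx : ∀ p, x p ∈ Set.Icc (0:ℝ) 1) :
    |∑ q, g q (∑ p, ψ p q (x p)) - ∑ q, G q (∑ p, Ψ p q (x p))| < ε := by
  have hdpos : (0:ℝ) < d := by exact_mod_cast hd
  have hcard : (Finset.univ : Finset (Fin d)).card = d := by simp
  -- bounds on inner sums
  have hs : ∀ q, |∑ p, ψ p q (x p)| ≤ B := by
    intro q
    calc |∑ p, ψ p q (x p)| ≤ ∑ p, |ψ p q (x p)| := Finset.abs_sum_le_sum_abs _ _
      _ ≤ ∑ _p : Fin d, B / d := Finset.sum_le_sum fun p _ => hψ p q (x p) (hx p)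
      _ = B := by rw [Finset.sum_const, hcard, nsmul_eq_mul]; field_simp
  have hsS : ∀ q, |∑ p, ψ p q (x p) - ∑ p, Ψ p q (x p)| < δ := by
    intro q
    calc |∑ p, ψ p q (x p) - ∑ p, Ψ p q (x p)|
        = |∑ p, (ψ p q (x p) - Ψ p q (x p))| := by rw [Finset.sum_sub_distrib]
      _ ≤ ∑ p, |ψ p q (x p) - Ψ p q (x p)| := Finset.abs_sum_le_sum_abs _ _
      _ < ∑ _p : Fin d, δ / d := by
          apply Finset.sum_lt_sum_of_nonempty
          · exact Finset.univ_nonempty_iff.mpr ⟨⟨0, hd⟩⟩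
          · exact fun p _ => hΨ p q (x p) (hx p)
      _ = δ := by rw [Finset.sum_const, hcard, nsmul_eq_mul]; field_simp
  have hmem : ∀ q, (∑ p, ψ p q (x p)) ∈ Set.Icc (-B - 1) (B + 1) := by
    intro q
    have := abs_le.mp (hs q)
    constructor <;> [linarith [this.1]; linarith [this.2]]
  have hmem' : ∀ q, (∑ p, Ψ p q (x p)) ∈ Set.Icc (-B - 1) (B + 1) := by
    intro q
    have h1 := abs_le.mp (hs q)
    have h2 := abs_lt.mp (hsS q)
    constructor <;> nlinarith [h1.1, h1.2, h2.1, h2.2]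
  have key : ∀ q : Fin (m+1),
      |g q (∑ p, ψ p q (x p)) - G q (∑ p, Ψ p q (x p))| < ε / (m + 1) := by
    intro q
    have h1 := hg q _ (hmem q) _ (hmem' q) (hsS q)
    have h2 := hG q _ (hmem' q)
    have : |g q (∑ p, ψ p q (x p)) - G q (∑ p, Ψ p q (x p))|
        ≤ |g q (∑ p, ψ p q (x p)) - g q (∑ p, Ψ p q (x p))|
          + |g q (∑ p, Ψ p q (x p)) - G q (∑ p, Ψ p q (x p))| := abs_sub_le _ _ _
    have hm1 : (0:ℝ) < (m:ℝ) + 1 := by positivity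
    have heq : ε / (2 * (m + 1)) + ε / (2 * (m + 1)) = ε / (m + 1) := by field_simp; ring
    linarith
  calc |∑ q, g q (∑ p, ψ p q (x p)) - ∑ q, G q (∑ p, Ψ p q (x p))|
      = |∑ q, (g q (∑ p, ψ p q (x p)) - G q (∑ p, Ψ p q (x p)))| := by
        rw [Finset.sum_sub_distrib]
    _ ≤ ∑ q, |g q (∑ p, ψ p q (x p)) - G q (∑ p, Ψ p q (x p))| :=
        Finset.abs_sum_le_sum_abs _ _
    _ < ∑ _q : Fin (m+1), ε / (m + 1) := by
        apply Finset.sum_lt_sum_of_nonempty Finset.univ_nonempty (fun q _ => key q)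
    _ = ε := by
        rw [Finset.sum_const, Finset.card_univ, Fintype.card_fin, nsmul_eq_mul]
        have : ((m:ℝ) + 1) ≠ 0 := by positivity
        push_cast; field_simp
end

section
/- Let d ≥ 2 and m ∈ ℕ. Assume the Kolmogorov-representation hypothesis: every continuous function f : [0,1]^d → ℝ can be written as f(x₁,…,x_d) = Σ_{q=0}^{m} g_q(Σ_{p=1}^{d} ψ_{p,q}(x_p)) for some continuous functions ψ_{p,q} : [0,1] → ℝ and g_q : ℝ → ℝ. Then for every continuous f : [0,1]^d → ℝ and every ε > 0 there exist real polynomials P_{p,q} (for 1 ≤ p ≤ d, 0 ≤ q ≤ m) and Q_q (for 0 ≤ q ≤ m) in one variable such that sup_{x ∈ [0,1]^d} |f(x) − Σ_{q=0}^{m} Q_q(Σ_{p=1}^{d} P_{p,q}(x_p))| < ε. -/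
/-- **Polynomial instantiation of the Universal Approximation Theorem** (Theorem 1 of the
paper with the ansatz classes taken to be real polynomials in one variable, which are dense
in `C(I)` for every compact interval `I` by Stone–Weierstrass): assuming the Kolmogorov
representation hypothesis, every continuous function on the unit cube can be uniformly
approximated by two-block superpositions of univariate real polynomials. -/
theorem kkan_polynomial_approximation
    (d m : ℕ) (hd : 2 ≤ d)
    (hKolm : ∀ f : (Fin d → Set.Icc (0:ℝ) 1) → ℝ, Continuous f →
      ∃ (ψ : Fin d → Fin (m + 1) → C(Set.Icc (0:ℝ) 1, ℝ)) (g : Fin (m + 1) → C(ℝ, ℝ)),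
        ∀ x, f x = ∑ q, g q (∑ p, ψ p q (x p)))
    (f : (Fin d → Set.Icc (0:ℝ) 1) → ℝ) (hf : Continuous f)
    (ε : ℝ) (hε : 0 < ε) :
    ∃ (P : Fin d → Fin (m + 1) → Polynomial ℝ) (Q : Fin (m + 1) → Polynomial ℝ),
      ∀ x, |f x - ∑ q, (Q q).eval (∑ p, (P p q).eval (x p : ℝ))| < ε := by
  obtain ⟨ψ, g, hrep⟩ := hKolm f hf
  have hd0 : 0 < d := lt_of_lt_of_le two_pos hd
  have hdR : (0:ℝ) < d := by exact_mod_cast hd0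
  set εm : ℝ := ε / (2 * (m + 1)) with hεm_def
  have hεm : 0 < εm := by positivity
  -- a uniform bound on all the inner functions
  set C : ℝ := ∑ p : Fin d, ∑ q : Fin (m + 1), ‖ψ p q‖ with hC_def
  have hψbound : ∀ p q (t : Set.Icc (0:ℝ) 1), |ψ p q t| ≤ C := by
    intro p q t
    have h1 : |ψ p q t| ≤ ‖ψ p q‖ := (ψ p q).norm_coe_le_norm t
    have h2 : ‖ψ p q‖ ≤ ∑ q' : Fin (m + 1), ‖ψ p q'‖ :=
      Finset.single_le_sum (fun _ _ => norm_nonneg _) (Finset.mem_univ q)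
    have h3 : (∑ q' : Fin (m + 1), ‖ψ p q'‖) ≤ C :=
      Finset.single_le_sum (f := fun p' => ∑ q' : Fin (m + 1), ‖ψ p' q'‖)
        (fun _ _ => Finset.sum_nonneg fun _ _ => norm_nonneg _) (Finset.mem_univ p)
    linarith
  have hC0 : 0 ≤ C := le_trans (abs_nonneg _) (hψbound ⟨0, hd0⟩ 0 ⟨0, by norm_num⟩)
  -- uniform continuity of each outer function on the compact interval K
  set a : ℝ := -(d * C + 1) with ha_def
  set b : ℝ := d * C + 1 with hb_def
  have hgu : ∀ q : Fin (m + 1), ∃ δ > 0, ∀ s ∈ Set.Icc a b, ∀ t ∈ Set.Icc a b,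
      dist s t < δ → dist (g q s) (g q t) < εm := by
    intro q
    have := (isCompact_Icc (a := a) (b := b)).uniformContinuousOn_of_continuous
      (g q).continuous.continuousOn
    exact Metric.uniformContinuousOn_iff.mp this εm hεm
  choose δ hδpos hδ using hgu
  set δ0 : ℝ := min 1 (Finset.univ.inf' ⟨0, Finset.mem_univ 0⟩ δ) with hδ0_def
  have hδ0pos : 0 < δ0 := by
    apply lt_min one_pos
    exact (Finset.lt_inf'_iff _).mpr fun q _ => hδpos q
  have hδ0le : ∀ q, δ0 ≤ δ q := fun q =>
    le_trans (min_le_right _ _) (Finset.inf'_le _ (Finset.mem_univ q))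
  have hδ01 : δ0 ≤ 1 := min_le_left _ _
  -- choose inner polynomials
  have hP : ∀ p q, ∃ P : Polynomial ℝ, ∀ t : Set.Icc (0:ℝ) 1,
      |P.eval (t : ℝ) - ψ p q t| < δ0 / (2 * d) := by
    intro p q
    obtain ⟨P, hP⟩ := exists_polynomial_near_continuousMap 0 1 (ψ p q) (δ0 / (2 * d))
      (by positivity)
    refine ⟨P, fun t => ?_⟩
    have := (ContinuousMap.norm_lt_iff _ (by positivity)).mp hP t
    simpa [Real.norm_eq_abs] using this
  choose P hPpt using hP
  -- choose outer polynomials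
  have hQ : ∀ q, ∃ Q : Polynomial ℝ, ∀ s ∈ Set.Icc a b, |Q.eval s - g q s| < εm := by
    intro q
    exact exists_polynomial_near_of_continuousOn a b (g q)
      (g q).continuous.continuousOn εm hεm
  choose Q hQpt using hQ
  refine ⟨P, Q, fun x => ?_⟩
  set S : Fin (m + 1) → ℝ := fun q => ∑ p, ψ p q (x p) with hS_def
  set T : Fin (m + 1) → ℝ := fun q => ∑ p, (P p q).eval ((x p : ℝ)) with hT_def
  have hST : ∀ q, |T q - S q| < δ0 / 2 := by
    intro q
    have h1 : |T q - S q| ≤ ∑ p, |(P p q).eval ((x p : ℝ)) - ψ p q (x p)| := by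
      rw [hT_def, hS_def]
      simp only
      rw [← Finset.sum_sub_distrib]
      exact Finset.abs_sum_le_sum_abs _ _
    have h2 : (∑ p, |(P p q).eval ((x p : ℝ)) - ψ p q (x p)|) < ∑ _p : Fin d, δ0 / (2 * d) :=
      Finset.sum_lt_sum_of_nonempty ⟨⟨0, hd0⟩, Finset.mem_univ _⟩
        fun p _ => hPpt p q (x p)
    have h3 : (∑ _p : Fin d, δ0 / (2 * d)) = δ0 / 2 := by
      rw [Finset.sum_const, Finset.card_univ, Fintype.card_fin, nsmul_eq_mul]
      field_simp
    linarith
  have hSabs : ∀ q, |S q| ≤ d * C := by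
    intro q
    have h1 : |S q| ≤ ∑ p, |ψ p q (x p)| := Finset.abs_sum_le_sum_abs _ _
    have h2 : (∑ p, |ψ p q (x p)|) ≤ ∑ _p : Fin d, C :=
      Finset.sum_le_sum fun p _ => hψbound p q (x p)
    have h3 : (∑ _p : Fin d, C) = d * C := by
      rw [Finset.sum_const, Finset.card_univ, Fintype.card_fin, nsmul_eq_mul]
    linarith
  have hSmem : ∀ q, S q ∈ Set.Icc a b := by
    intro q
    have := abs_le.mp (hSabs q)
    exact ⟨by simp only [ha_def]; linarith [this.1], by simp only [hb_def]; linarith [this.2]⟩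
  have hTmem : ∀ q, T q ∈ Set.Icc a b := by
    intro q
    have h1 := abs_sub_lt_iff.mp (hST q)
    have h2 := abs_le.mp (hSabs q)
    exact ⟨by simp only [ha_def]; linarith [h1.2, h2.1],
           by simp only [hb_def]; linarith [h1.1, h2.2]⟩
  have hterm : ∀ q : Fin (m + 1),
      |g q (S q) - (Q q).eval (T q)| < 2 * εm := by
    intro q
    have h1 : dist (g q (S q)) (g q (T q)) < εm := by
      apply hδ (q := q) _ (hSmem q) _ (hTmem q)
      rw [Real.dist_eq]
      have := hST q
      rw [abs_sub_comm] at this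
      calc |S q - T q| < δ0 / 2 := this
        _ < δ0 := by linarith
        _ ≤ δ q := hδ0le q
    have h2 : |(Q q).eval (T q) - g q (T q)| < εm := hQpt q (T q) (hTmem q)
    rw [Real.dist_eq] at h1
    calc |g q (S q) - (Q q).eval (T q)|
        ≤ |g q (S q) - g q (T q)| + |g q (T q) - (Q q).eval (T q)| := abs_sub_le _ _ _
      _ < εm + εm := by rw [abs_sub_comm (g q (T q))]; exact add_lt_add h1 h2
      _ = 2 * εm := by ring
  have hsum : |f x - ∑ q, (Q q).eval (T q)| < ε := by
    rw [hrep x]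
    have h1 : |∑ q, (g q (S q) - (Q q).eval (T q))| ≤
        ∑ q, |g q (S q) - (Q q).eval (T q)| := Finset.abs_sum_le_sum_abs _ _
    have h2 : (∑ q, |g q (S q) - (Q q).eval (T q)|) < ∑ _q : Fin (m + 1), 2 * εm :=
      Finset.sum_lt_sum_of_nonempty ⟨0, Finset.mem_univ _⟩ fun q _ => hterm q
    have h3 : (∑ _q : Fin (m + 1), 2 * εm) = ε := by
      rw [Finset.sum_const, Finset.card_univ, Fintype.card_fin, nsmul_eq_mul, hεm_def]
      have : (2 : ℝ) * (m + 1) ≠ 0 := by positivity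
      push_cast
      field_simp
    rw [← Finset.sum_sub_distrib]
    calc |∑ q, (g q (S q) - (Q q).eval (T q))| ≤ _ := h1
      _ < _ := h2
      _ = ε := h3
  exact hsum
end

section
/- Let d ≥ 2 and m ∈ ℕ. Let σ : ℝ → ℝ be a continuous sigmoidal function, i.e., lim_{t → −∞} σ(t) = 0 and lim_{t → +∞} σ(t) = 1. Assume: (i) the Kolmogorov-representation hypothesis, namely that every continuous function f : [0,1]^d → ℝ can be written as f(x₁,…,x_d) = Σ_{q=0}^{m} g_q(Σ_{p=1}^{d} ψ_{p,q}(x_p)) with ψ_{p,q} : [0,1] → ℝ and g_q : ℝ → ℝ continuous; and (ii) for every compact interval I ⊂ ℝ, the set of finite linear combinations { x ↦ Σ_{i=1}^{M} a_i σ(b_i x + c_i) : M ∈ ℕ, a_i, b_i, c_i ∈ ℝ } is dense in C(I) with the supremum norm. Then for every continuous f : [0,1]^d → ℝ and every ε > 0 there exist M_ψ, M_g ∈ ℕ and real parameters a^{p,q}_i, b^{p,q}_i, c^{p,q}_i (1 ≤ i ≤ M_ψ) and A^{q}_j, B^{q}_j, C^{q}_j (1 ≤ j ≤ M_g) such that,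 with Ψ_{p,q}(x) = Σ_{i=1}^{M_ψ} a^{p,q}_i σ(b^{p,q}_i x + c^{p,q}_i) and G_q(ξ) = Σ_{j=1}^{M_g} A^{q}_j σ(B^{q}_j ξ + C^{q}_j), one has sup_{x ∈ [0,1]^d} |f(x) − Σ_{q=0}^{m} G_q(Σ_{p=1}^{d} Ψ_{p,q}(x_p))| < ε. -/
lemma pad_sum {M M' : ℕ} (h : M ≤ M') (σ : ℝ → ℝ) (a b c : Fin M → ℝ) :
    ∃ a' b' c' : Fin M' → ℝ, ∀ x : ℝ,
      ∑ i, a' i * σ (b' i * x + c' i) = ∑ i, a i * σ (b i * x + c i) := by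
  refine ⟨fun i => if h2 : (i : ℕ) < M then a ⟨i, h2⟩ else 0,
          fun i => if h2 : (i : ℕ) < M then b ⟨i, h2⟩ else 0,
          fun i => if h2 : (i : ℕ) < M then c ⟨i, h2⟩ else 0, fun x => ?_⟩
  set F : ℕ → ℝ := fun i => if h2 : i < M then a ⟨i, h2⟩ * σ (b ⟨i, h2⟩ * x + c ⟨i, h2⟩) else 0
    with hF
  have h1 : ∀ i : Fin M', (if h2 : (i : ℕ) < M then a ⟨i, h2⟩ else 0) *
      σ ((if h2 : (i : ℕ) < M then b ⟨i, h2⟩ else 0) * x +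
        (if h2 : (i : ℕ) < M then c ⟨i, h2⟩ else 0)) = F i := by
    intro i
    by_cases h2 : (i : ℕ) < M <;> simp [hF, h2]
  calc ∑ i : Fin M', _ = ∑ i : Fin M', F i := Finset.sum_congr rfl fun i _ => h1 i
    _ = ∑ i ∈ Finset.range M', F i := Fin.sum_univ_eq_sum_range F M'
    _ = ∑ i ∈ Finset.range M, F i := by
        refine (Finset.sum_subset (Finset.range_subset_range.mpr h) ?_).symm
        intro i _ hi
        simp only [Finset.mem_range, not_lt] at hi
        simp [hF, not_lt.mpr hi]
    _ = ∑ i : Fin M, F i := (Fin.sum_univ_eq_sum_range F M).symm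
    _ = ∑ i : Fin M, a i * σ (b i * x + c i) := by
        refine Finset.sum_congr rfl fun i _ => ?_
        simp [hF, i.isLt]

/-- **Kůrková's approximate Kolmogorov representation**: instantiation of the paper's
Universal Approximation Theorem with the ansatz classes taken as staircase-like finite
linear combinations `x ↦ Σ_i a_i σ(b_i x + c_i)` of a continuous sigmoidal function `σ`.
The Kolmogorov representation hypothesis (i) and the one-dimensional density of sigmoidal
combinations in `C(I)` for every compact interval `I` (Cybenko's theorem) (ii) are stated
as explicit hypotheses. -/
theorem kurkova_sigmoidal_approximation
    (d m : ℕ) (hd : 2 ≤ d)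
    (σ : ℝ → ℝ) (hσ_cont : Continuous σ)
    (hσ_bot : Filter.Tendsto σ Filter.atBot (nhds 0))
    (hσ_top : Filter.Tendsto σ Filter.atTop (nhds 1))
    (hKolm : ∀ f : (Fin d → Set.Icc (0:ℝ) 1) → ℝ, Continuous f →
      ∃ (ψ : Fin d → Fin (m + 1) → C(Set.Icc (0:ℝ) 1, ℝ)) (g : Fin (m + 1) → C(ℝ, ℝ)),
        ∀ x, f x = ∑ q, g q (∑ p, ψ p q (x p)))
    (hdense : ∀ l r : ℝ, ∀ h : ℝ → ℝ, ContinuousOn h (Set.Icc l r) →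
      ∀ δ : ℝ, 0 < δ → ∃ (M : ℕ) (a b c : Fin M → ℝ),
        ∀ x ∈ Set.Icc l r, |h x - ∑ i, a i * σ (b i * x + c i)| < δ)
    (f : (Fin d → Set.Icc (0:ℝ) 1) → ℝ) (hf : Continuous f)
    (ε : ℝ) (hε : 0 < ε) :
    ∃ (Mψ Mg : ℕ) (a b c : Fin d → Fin (m + 1) → Fin Mψ → ℝ)
      (A B C : Fin (m + 1) → Fin Mg → ℝ),
      ∀ x, |f x - ∑ q, ∑ j, A q j *
        σ (B q j * (∑ p, ∑ i, a p q i * σ (b p q i * (x p : ℝ) + c p q i)) + C q j)| < ε := by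
  obtain ⟨ψ, g, hrep⟩ := hKolm f hf
  have hd0 : 0 < d := by omega
  -- the bound R on sums of ψ's
  set R : ℝ := ∑ p, ∑ q, ‖ψ p q‖ with hR
  have hRnn : 0 ≤ R := Finset.sum_nonneg fun p _ =>
    Finset.sum_nonneg fun q _ => norm_nonneg _
  have hψR : ∀ p q, ‖ψ p q‖ ≤ R := by
    intro p q
    calc ‖ψ p q‖ ≤ ∑ q, ‖ψ p q‖ :=
          Finset.single_le_sum (fun i _ => norm_nonneg (ψ p i)) (Finset.mem_univ q)
      _ ≤ R := Finset.single_le_sum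
          (fun i _ => Finset.sum_nonneg fun j _ => norm_nonneg (ψ i j)) (Finset.mem_univ p)
  set I : Set ℝ := Set.Icc (-(d * R + 1)) (d * R + 1) with hI
  -- the error target for each g
  set ε' : ℝ := ε / (2 * (m + 1)) with hε'
  have hε'pos : 0 < ε' := by positivity
  -- uniform continuity of each g q on I
  have hUC : ∀ q : Fin (m + 1), ∃ η > 0, ∀ s ∈ I, ∀ t ∈ I, |s - t| < η →
      |g q s - g q t| < ε' := by
    intro q
    have : UniformContinuousOn (g q) I :=
      isCompact_Icc.uniformContinuousOn_of_continuous (g q).continuous.continuousOn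
    rw [Metric.uniformContinuousOn_iff] at this
    obtain ⟨η, hη, hspec⟩ := this ε' hε'pos
    exact ⟨η, hη, fun s hs t ht hst => by
      have := hspec s hs t ht (by rwa [Real.dist_eq]); rwa [Real.dist_eq] at this⟩
  choose η hηpos hηspec using hUC
  set η₀ : ℝ := Finset.univ.inf' Finset.univ_nonempty η with hη₀
  have hη₀pos : 0 < η₀ := by
    rw [hη₀, Finset.lt_inf'_iff]
    exact fun q _ => hηpos q
  have hη₀le : ∀ q, η₀ ≤ η q := fun q => Finset.inf'_le η (Finset.mem_univ q)
  set δψ : ℝ := min η₀ 1 / d with hδψ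
  have hδψpos : 0 < δψ := by
    apply div_pos (lt_min hη₀pos one_pos)
    exact_mod_cast hd0
  have hdδψ : (d : ℝ) * δψ = min η₀ 1 := by
    rw [hδψ, mul_div_cancel₀]
    exact_mod_cast hd0.ne'
  -- approximate each ψ p q
  have hψapprox : ∀ p q, ∃ (M : ℕ) (a b c : Fin M → ℝ),
      ∀ x ∈ Set.Icc (0:ℝ) 1, |ψ p q (Set.projIcc 0 1 zero_le_one x) -
        ∑ i, a i * σ (b i * x + c i)| < δψ := by
    intro p q
    exact hdense 0 1 (fun x => ψ p q (Set.projIcc 0 1 zero_le_one x))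
      (((ψ p q).continuous.comp continuous_projIcc).continuousOn) δψ hδψpos
  choose Mψf af bf cf hψf using hψapprox
  -- approximate each g q on I
  have hgapprox : ∀ q, ∃ (M : ℕ) (A B C : Fin M → ℝ),
      ∀ x ∈ I, |g q x - ∑ j, A j * σ (B j * x + C j)| < ε' :=
    fun q => hdense _ _ (g q) (g q).continuous.continuousOn ε' hε'pos
  choose Mgf Af Bf Cf hgf using hgapprox
  -- pad to common sizes
  set Mψ : ℕ := Finset.univ.sup fun p => Finset.univ.sup (Mψf p) with hMψ
  have hMψle : ∀ p q, Mψf p q ≤ Mψ := fun p q =>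
    le_trans (Finset.le_sup (Finset.mem_univ q))
      (Finset.le_sup (f := fun p => Finset.univ.sup (Mψf p)) (Finset.mem_univ p))
  set Mg : ℕ := Finset.univ.sup Mgf with hMg
  have hMgle : ∀ q, Mgf q ≤ Mg := fun q => Finset.le_sup (Finset.mem_univ q)
  have hpadψ : ∀ p q, ∃ a' b' c' : Fin Mψ → ℝ, ∀ x : ℝ,
      ∑ i, a' i * σ (b' i * x + c' i) = ∑ i, af p q i * σ (bf p q i * x + cf p q i) :=
    fun p q => pad_sum (hMψle p q) σ _ _ _
  choose a b c hab using hpadψ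
  have hpadg : ∀ q, ∃ A' B' C' : Fin Mg → ℝ, ∀ x : ℝ,
      ∑ j, A' j * σ (B' j * x + C' j) = ∑ j, Af q j * σ (Bf q j * x + Cf q j) :=
    fun q => pad_sum (hMgle q) σ _ _ _
  choose A B C hAB using hpadg
  refine ⟨Mψ, Mg, a, b, c, A, B, C, fun x => ?_⟩
  -- notation for the inner sums
  set SΨ : Fin (m + 1) → ℝ :=
    fun q => ∑ p, ∑ i, a p q i * σ (b p q i * (x p : ℝ) + c p q i) with hSΨ
  set Sψ : Fin (m + 1) → ℝ := fun q => ∑ p, ψ p q (x p) with hSψ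
  -- pointwise error of each padded Ψ
  have key1 : ∀ p q, |(ψ p q (x p) : ℝ) -
      ∑ i, a p q i * σ (b p q i * (x p : ℝ) + c p q i)| < δψ := by
    intro p q
    rw [hab p q]
    have hmem : ((x p : ℝ)) ∈ Set.Icc (0:ℝ) 1 := (x p).2
    have := hψf p q (x p : ℝ) hmem
    rwa [Set.projIcc_of_mem zero_le_one hmem] at this
  have key2 : ∀ q, |Sψ q - SΨ q| < min η₀ 1 := by
    intro q
    have h1 : |Sψ q - SΨ q| ≤ ∑ p, |(ψ p q (x p) : ℝ) -
        ∑ i, a p q i * σ (b p q i * (x p : ℝ) + c p q i)| := by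
      rw [hSψ, hSΨ, ← Finset.sum_sub_distrib]
      exact Finset.abs_sum_le_sum_abs _ _
    have h2 : ∑ p, |(ψ p q (x p) : ℝ) -
        ∑ i, a p q i * σ (b p q i * (x p : ℝ) + c p q i)| < ∑ _p : Fin d, δψ :=
      Finset.sum_lt_sum_of_nonempty (Finset.univ_nonempty_iff.mpr ⟨⟨0, hd0⟩⟩)
        fun p _ => key1 p q
    have h3 : ∑ _p : Fin d, δψ = min η₀ 1 := by
      rw [Finset.sum_const, Finset.card_univ, Fintype.card_fin, nsmul_eq_mul, hdδψ]
    linarith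
  have hSψabs : ∀ q, |Sψ q| ≤ d * R := by
    intro q
    calc |Sψ q| ≤ ∑ p, |(ψ p q (x p) : ℝ)| := Finset.abs_sum_le_sum_abs _ _
      _ ≤ ∑ _p : Fin d, R := Finset.sum_le_sum fun p _ =>
          le_trans ((ψ p q).norm_coe_le_norm (x p)) (hψR p q)
      _ = d * R := by
          rw [Finset.sum_const, Finset.card_univ, Fintype.card_fin, nsmul_eq_mul]
  have hSψmem : ∀ q, Sψ q ∈ I := by
    intro q
    have h := hSψabs q
    rw [abs_le] at h
    rw [hI, Set.mem_Icc]
    constructor <;> linarith [h.1, h.2]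
  have hSΨmem : ∀ q, SΨ q ∈ I := by
    intro q
    have h1 := key2 q
    have h2 := hSψabs q
    rw [hI, Set.mem_Icc]
    have h3 : min η₀ 1 ≤ 1 := min_le_right _ _
    rw [abs_lt] at h1
    rw [abs_le] at h2
    constructor <;> linarith [h1.1, h1.2, h2.1, h2.2]
  -- per-q error bound
  have key3 : ∀ q : Fin (m + 1),
      |g q (Sψ q) - ∑ j, A q j * σ (B q j * SΨ q + C q j)| < ε' + ε' := by
    intro q
    have h1 : |g q (Sψ q) - g q (SΨ q)| < ε' := by
      apply hηspec q (Sψ q) (hSψmem q) (SΨ q) (hSΨmem q)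
      exact lt_of_lt_of_le (key2 q) (le_trans (min_le_left _ _) (hη₀le q))
    have h2 : |g q (SΨ q) - ∑ j, A q j * σ (B q j * SΨ q + C q j)| < ε' := by
      rw [hAB q]
      exact hgf q (SΨ q) (hSΨmem q)
    calc |g q (Sψ q) - ∑ j, A q j * σ (B q j * SΨ q + C q j)|
        ≤ |g q (Sψ q) - g q (SΨ q)| + |g q (SΨ q) - ∑ j, A q j * σ (B q j * SΨ q + C q j)| :=
          abs_sub_le _ _ _
      _ < ε' + ε' := add_lt_add h1 h2
  -- assemble
  have hfx : f x = ∑ q, g q (Sψ q) := hrep x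
  calc |f x - ∑ q, ∑ j, A q j * σ (B q j * SΨ q + C q j)|
      = |∑ q, (g q (Sψ q) - ∑ j, A q j * σ (B q j * SΨ q + C q j))| := by
        rw [hfx, Finset.sum_sub_distrib]
    _ ≤ ∑ q, |g q (Sψ q) - ∑ j, A q j * σ (B q j * SΨ q + C q j)| :=
        Finset.abs_sum_le_sum_abs _ _
    _ < ∑ _q : Fin (m + 1), (ε' + ε') :=
        Finset.sum_lt_sum_of_nonempty Finset.univ_nonempty fun q _ => key3 q
    _ = ε := by
        rw [Finset.sum_const, Finset.card_univ, Fintype.card_fin, nsmul_eq_mul, hε']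
        field_simp
        push_cast
        ring
end
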